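/- Let F : ℝ → ℝ be smooth with F'(x) > 0 for all x, and let T : ℝ → ℝ be smooth. Define Ã(x) = F'(x)·[[0, 1],[-T(F(x)), 0]] and h(x) = [[1, 0],[F''(x)/(2F'(x)), 1]]·[[F'(x)^(-1/2), 0],[0, F'(x)^(1/2)]]. Then the gauge transform h•Ã = hÃh⁻¹ - h'h⁻¹ equals [[0, 1],[-T_F(x), 0]], where T_F(x) = F'(x)²·T(F(x)) + ½·S(F)(x) and S(F) = F'''/F' - (3/2)·(F''/F')² is the Schwarzian derivative of F. -/

import Mathlib

/-!
Write `u = F''/(2F')` and `s = √F'`, so that `s'/s = u` and `h = [[1,0],[u,1]]·diag(s⁻¹, s)`.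
Gauge transformations compose, `(gh)•A = g•(h•A)`. The diagonal factor rescales `Ã` to
`[[u, 1], [-F'²·T∘F, -u]]`, and the unipotent factor then clears the diagonal, leaving
`u² - u' - F'²·T∘F` in the lower corner. Finally `u' - u² = ½S(F)`.
-/

open Matrix

/-- Entrywise derivative of a matrix-valued function on `ℝ`. -/
noncomputable def derivM (h : ℝ → Matrix (Fin 2) (Fin 2) ℝ) (x : ℝ) :
    Matrix (Fin 2) (Fin 2) ℝ := Matrix.of fun i j => deriv (fun t => h t i j) x

/-- The gauge transformation `h•A = hAh⁻¹ - h'h⁻¹` of a matrix-valued function `A` by a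
`GL(2,ℝ)`-valued function `h`. -/
noncomputable def gaugeTransform (h A : ℝ → Matrix (Fin 2) (Fin 2) ℝ) (x : ℝ) :
    Matrix (Fin 2) (Fin 2) ℝ := h x * A x * (h x)⁻¹ - derivM h x * (h x)⁻¹

/-- The Schwarzian derivative `S(F) = F'''/F' - (3/2)(F''/F')²`. -/
noncomputable def schwarzian (F : ℝ → ℝ) (x : ℝ) : ℝ :=
  deriv (deriv (deriv F)) x / deriv F x - (3/2) * (deriv (deriv F) x / deriv F x) ^ 2

section

variable {x : ℝ}

theorem derivM_mul {g h : ℝ → Matrix (Fin 2) (Fin 2) ℝ}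
    (hg : ∀ i j, DifferentiableAt ℝ (fun t => g t i j) x)
    (hh : ∀ i j, DifferentiableAt ℝ (fun t => h t i j) x) :
    derivM (fun t => g t * h t) x = derivM g x * h x + g x * derivM h x := by
  ext i j
  simp only [derivM, Matrix.mul_apply, Matrix.add_apply, Matrix.of_apply]
  rw [deriv_fun_sum fun k _ => (hg i k).fun_mul (hh k j), ← Finset.sum_add_distrib]
  exact Finset.sum_congr rfl fun k _ => deriv_fun_mul (hg i k) (hh k j)

theorem gaugeTransform_mul {g h A : ℝ → Matrix (Fin 2) (Fin 2) ℝ}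
    (hg : ∀ i j, DifferentiableAt ℝ (fun t => g t i j) x)
    (hh : ∀ i j, DifferentiableAt ℝ (fun t => h t i j) x) (hx : IsUnit (h x).det) :
    gaugeTransform (fun t => g t * h t) A x = gaugeTransform g (gaugeTransform h A) x := by
  simp only [gaugeTransform, derivM_mul hg hh, Matrix.mul_inv_rev, add_mul, mul_sub, sub_mul,
    Matrix.mul_assoc, Matrix.mul_nonsing_inv_cancel_left _ _ hx]
  abel

theorem differentiableAt_fin_two_entries {a b c d : ℝ → ℝ} (ha : DifferentiableAt ℝ a x)
    (hb : DifferentiableAt ℝ b x) (hc : DifferentiableAt ℝ c x) (hd : DifferentiableAt ℝ d x) :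
    ∀ i j, DifferentiableAt ℝ (fun t => !![a t, b t; c t, d t] i j) x := by
  intro i j
  fin_cases i <;> fin_cases j <;> simpa

theorem derivM_fin_two {a b c d : ℝ → ℝ} {a' b' c' d' : ℝ} (ha : HasDerivAt a a' x)
    (hb : HasDerivAt b b' x) (hc : HasDerivAt c c' x) (hd : HasDerivAt d d' x) :
    derivM (fun t => !![a t, b t; c t, d t]) x = !![a', b'; c', d'] := by
  ext i j
  fin_cases i <;> fin_cases j
  exacts [ha.deriv, hb.deriv, hc.deriv, hd.deriv]

theorem gaugeTransform_diagonal {d : ℝ → ℝ} {d' : ℝ} (hd : HasDerivAt d d' x) (hx : d x ≠ 0)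
    (A : ℝ → Matrix (Fin 2) (Fin 2) ℝ) :
    gaugeTransform (fun t => !![(d t)⁻¹, 0; 0, d t]) A x =
      !![A x 0 0 + d' / d x, A x 0 1 / d x ^ 2; d x ^ 2 * A x 1 0, A x 1 1 - d' / d x] := by
  have hinv : !![(d x)⁻¹, 0; 0, d x]⁻¹ = !![d x, 0; 0, (d x)⁻¹] := by
    refine Matrix.inv_eq_right_inv ?_
    simp [Matrix.one_fin_two, hx]
  rw [gaugeTransform, derivM_fin_two (hd.fun_inv hx) (hasDerivAt_const x 0)
    (hasDerivAt_const x 0) hd, hinv, Matrix.eta_fin_two (A x)]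
  ext i j
  fin_cases i <;> fin_cases j <;> simp <;> field_simp
  ring

theorem gaugeTransform_lowerUnipotent {u : ℝ → ℝ} {u' : ℝ} (hu : HasDerivAt u u' x)
    (A : ℝ → Matrix (Fin 2) (Fin 2) ℝ) :
    gaugeTransform (fun t => !![1, 0; u t, 1]) A x =
      !![A x 0 0 - u x * A x 0 1, A x 0 1;
        A x 1 0 + u x * (A x 0 0 - A x 1 1) - u x ^ 2 * A x 0 1 - u', A x 1 1 + u x * A x 0 1] := by
  have hinv : !![1, 0; u x, 1]⁻¹ = !![1, 0; -u x, 1] := by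
    refine Matrix.inv_eq_right_inv ?_
    simp [Matrix.one_fin_two]
  rw [gaugeTransform, derivM_fin_two (hasDerivAt_const x 1) (hasDerivAt_const x 0) hu
    (hasDerivAt_const x 1), hinv, Matrix.eta_fin_two (A x)]
  ext i j
  fin_cases i <;> fin_cases j <;> simp <;> ring

theorem hasDerivAt_deriv_deriv_div_two_deriv {F : ℝ → ℝ}
    (h1 : DifferentiableAt ℝ (deriv F) x) (h2 : DifferentiableAt ℝ (deriv (deriv F)) x)
    (h0 : deriv F x ≠ 0) :
    HasDerivAt (fun t => deriv (deriv F) t / (2 * deriv F t))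
      (schwarzian F x / 2 + (deriv (deriv F) x / (2 * deriv F x)) ^ 2) x := by
  refine (h2.hasDerivAt.div (h1.hasDerivAt.const_mul 2)
    (mul_ne_zero two_ne_zero h0)).congr_deriv ?_
  unfold schwarzian
  field_simp
  ring

theorem HasDerivAt.sqrt_eq_mul_div {f : ℝ → ℝ} {f' : ℝ} (hf : HasDerivAt f f' x)
    (hx : 0 < f x) : HasDerivAt (fun t => √(f t)) (√(f x) * (f' / (2 * f x))) x := by
  convert hf.sqrt hx.ne' using 1
  field_simp
  rw [Real.sq_sqrt hx.le, mul_comm]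

end

theorem diffeomorphism_action_on_hill_potentials_general
    (F T : ℝ → ℝ) (hF : ContDiff ℝ (⊤ : ℕ∞) F)
    (hF' : ∀ x, 0 < deriv F x)
    (Atil h : ℝ → Matrix (Fin 2) (Fin 2) ℝ)
    (hAtil : Atil = fun x => deriv F x • !![0, 1; -T (F x), 0])
    (hh : h = fun x =>
      !![1, 0; deriv (deriv F) x / (2 * deriv F x), 1] *
      !![(Real.sqrt (deriv F x))⁻¹, 0; 0, Real.sqrt (deriv F x)])
    (T_F : ℝ → ℝ)
    (hTF : T_F = fun x => (deriv F x) ^ 2 * T (F x) + (1/2) * schwarzian F x) :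
    ∀ x, gaugeTransform h Atil x = !![0, 1; -T_F x, 0] := by
  intro x
  have hF1 : ContDiff ℝ (⊤ : ℕ∞) (deriv F) := (contDiff_infty_iff_deriv.mp hF).2
  have hF2 : ContDiff ℝ (⊤ : ℕ∞) (deriv (deriv F)) := (contDiff_infty_iff_deriv.mp hF1).2
  have hd1 : DifferentiableAt ℝ (deriv F) x := hF1.differentiable (by simp) x
  have hd2 : DifferentiableAt ℝ (deriv (deriv F)) x := hF2.differentiable (by simp) x
  have hu := hasDerivAt_deriv_deriv_div_two_deriv hd1 hd2 (hF' x).ne'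
  have hs := hd1.hasDerivAt.sqrt_eq_mul_div (hF' x)
  have hsx : √(deriv F x) ≠ 0 := (Real.sqrt_pos.mpr (hF' x)).ne'
  subst hh hAtil hTF
  rw [gaugeTransform_mul (differentiableAt_fin_two_entries (differentiableAt_const 1)
    (differentiableAt_const 0) hu.differentiableAt (differentiableAt_const 1))
    (differentiableAt_fin_two_entries (hs.differentiableAt.fun_inv hsx) (differentiableAt_const 0)
    (differentiableAt_const 0) hs.differentiableAt) (by simp [hsx]),
    gaugeTransform_lowerUnipotent hu, gaugeTransform_diagonal hs hsx]
  ext i j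
  fin_cases i <;> fin_cases j <;> simp [Real.sq_sqrt (hF' x).le, hsx, (hF' x).ne']
  ring

/-- The action of a diffeomorphism `F` on Hill potentials, `T ↦ F'²·(T∘F) + ½S(F)`, is
realized by an explicit lower-triangular gauge transformation taking the pullback
`Atil = F'·[[0,1],[-T∘F,0]]` of the Drinfeld–Sokolov normal form back to the
Drinfeld–Sokolov slice. -/
theorem diffeomorphism_action_on_hill_potentials
    (F T : ℝ → ℝ) (hF : ContDiff ℝ (⊤ : ℕ∞) F) (hT : ContDiff ℝ (⊤ : ℕ∞) T)
    (hF' : ∀ x, 0 < deriv F x)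
    (Atil h : ℝ → Matrix (Fin 2) (Fin 2) ℝ)
    (hAtil : Atil = fun x => deriv F x • !![0, 1; -T (F x), 0])
    (hh : h = fun x =>
      !![1, 0; deriv (deriv F) x / (2 * deriv F x), 1] *
      !![(Real.sqrt (deriv F x))⁻¹, 0; 0, Real.sqrt (deriv F x)])
    (T_F : ℝ → ℝ)
    (hTF : T_F = fun x => (deriv F x) ^ 2 * T (F x) + (1/2) * schwarzian F x) :
    ∀ x, gaugeTransform h Atil x = !![0, 1; -T_F x, 0] :=
  diffeomorphism_action_on_hill_potentials_general F T hF hF' Atil h hAtil hh T_F hTF
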